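/- Let 𝐆 = (G,T) be a pile, let N₀ be an open normal subgroup of G, and let φ: 𝐆 → 𝐀 be a morphism of piles into a finite pile 𝐀. Then there exist a finite pile 𝐁, an epimorphism of piles ψ: 𝐆 → 𝐁 with Ker(ψ) ≤ N₀, and a morphism of piles α: 𝐁 → 𝐀 such that α ∘ ψ = φ. -/

import Mathlib

open Pointwise

/-- A pile `(G,T)`: a profinite group `G`, a profinite space `T`, and a continuous action
of `G` on `T`. -/
structure Pile : Type 1 where
  G : Type
  T : Type
  [grp : Group G]
  [topG : TopologicalSpace G]
  [tgG : IsTopologicalGroup G]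
  [cG : CompactSpace G]
  [h2G : T2Space G]
  [tdG : TotallyDisconnectedSpace G]
  [topT : TopologicalSpace T]
  [cT : CompactSpace T]
  [h2T : T2Space T]
  [tdT : TotallyDisconnectedSpace T]
  [act : MulAction G T]
  [csmul : ContinuousSMul G T]

attribute [instance] Pile.grp Pile.topG Pile.tgG Pile.cG Pile.h2G Pile.tdG
  Pile.topT Pile.cT Pile.h2T Pile.tdT Pile.act Pile.csmul

/-- A pile is finite if both its group and its space are finite. -/
def Pile.IsFinite (P : Pile) : Prop := Finite P.G ∧ Finite P.T

/-- A morphism of piles: a continuous group homomorphism together with a continuous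
equivariant map of the spaces. -/
structure PileHom (P Q : Pile) where
  toGrp : P.G →* Q.G
  contGrp : Continuous toGrp
  toSp : P.T → Q.T
  contSp : Continuous toSp
  equivariant : ∀ (g : P.G) (t : P.T), toSp (g • t) = toGrp g • toSp t

/-- Composition of pile morphisms. -/
def PileHom.comp {P Q R : Pile} (g : PileHom Q R) (f : PileHom P Q) : PileHom P R where
  toGrp := g.toGrp.comp f.toGrp
  contGrp := g.contGrp.comp f.contGrp
  toSp := g.toSp ∘ f.toSp
  contSp := g.contSp.comp f.contSp
  equivariant := fun a t => by
    simp [Function.comp, f.equivariant, g.equivariant]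

/-- A pile morphism is an epimorphism if it is surjective on groups and spaces and for
every point `x` of the target space there is a point `y` above it whose stabilizer maps
onto the stabilizer of `x`. -/
def PileHom.IsEpi {P Q : Pile} (f : PileHom P Q) : Prop :=
  Function.Surjective f.toGrp ∧ Function.Surjective f.toSp ∧
  ∀ x : Q.T, ∃ y : P.T, f.toSp y = x ∧
    (MulAction.stabilizer P.G y).map f.toGrp = MulAction.stabilizer Q.G x

/-- The induced map of orbit spaces. -/
def PileHom.orbitMap {P Q : Pile} (f : PileHom P Q) :
    Quotient (MulAction.orbitRel P.G P.T) → Quotient (MulAction.orbitRel Q.G Q.T) :=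
  Quotient.lift (fun t => Quotient.mk (MulAction.orbitRel Q.G Q.T) (f.toSp t))
    (fun t₁ t₂ h => Quotient.sound (by
      obtain ⟨g, hg⟩ := MulAction.mem_orbit_iff.mp h
      exact MulAction.mem_orbit_iff.mpr ⟨f.toGrp g, by rw [← hg, f.equivariant]⟩))

/-- A pile morphism is a rigid epimorphism if it is an epimorphism, maps each point
stabilizer isomorphically onto the stabilizer of the image point, and induces a
homeomorphism of the orbit spaces. -/
def PileHom.IsRigid {P Q : Pile} (f : PileHom P Q) : Prop :=
  f.IsEpi ∧
  (∀ y : P.T, Set.InjOn f.toGrp (MulAction.stabilizer P.G y) ∧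
    (MulAction.stabilizer P.G y).map f.toGrp = MulAction.stabilizer Q.G (f.toSp y)) ∧
  IsHomeomorph f.orbitMap

open MulAction
set_option linter.unusedSectionVars false
set_option maxHeartbeats 1000000

section Top


variable {X : Type*} [TopologicalSpace X] [CompactSpace X] [T2Space X]
  [TotallyDisconnectedSpace X]

theorem exists_isClopen_sep_point {x : X} {L : Set X} (hL : IsClosed L) (hx : x ∉ L) :
    ∃ U : Set X, IsClopen U ∧ x ∈ U ∧ Disjoint U L := by
  classical
  have h : ∀ y : L, ∃ V : Set X, IsClopen V ∧ x ∈ V ∧ (y : X) ∉ V := by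
    rintro ⟨y, hy⟩
    have hxy : x ≠ y := fun h => hx (h ▸ hy)
    obtain ⟨V, hV, hxV, hyV⟩ := exists_isClopen_of_totally_separated hxy
    exact ⟨V, hV, hxV, fun h => hyV h⟩
  choose V hV hxV hyV using h
  have hLc : IsCompact L := hL.isCompact
  have hcover : L ⊆ ⋃ y : L, (V y)ᶜ := fun y hy => Set.mem_iUnion.2 ⟨⟨y, hy⟩, hyV ⟨y, hy⟩⟩
  obtain ⟨t, ht⟩ := hLc.elim_finite_subcover (fun y : L => (V y)ᶜ)
    (fun y => (hV y).1.isOpen_compl) hcover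
  refine ⟨⋂ y ∈ t, V y, ?_, ?_, ?_⟩
  · exact Set.Finite.isClopen_biInter t.finite_toSet (fun y _ => hV y)
  · exact Set.mem_biInter fun y _ => hxV y
  · rw [Set.disjoint_left]
    intro a ha haL
    obtain ⟨y, hyt, hy⟩ := Set.mem_iUnion₂.1 (ht haL)
    exact hy (Set.mem_iInter₂.1 ha y hyt)

theorem exists_isClopen_sep {K L : Set X} (hK : IsClosed K) (hL : IsClosed L)
    (hd : Disjoint K L) : ∃ U : Set X, IsClopen U ∧ K ⊆ U ∧ Disjoint U L := by
  classical
  have h : ∀ x : K, ∃ U : Set X, IsClopen U ∧ (x : X) ∈ U ∧ Disjoint U L := fun ⟨x, hx⟩ =>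
    exists_isClopen_sep_point hL (fun hxL => hd.ne_of_mem hx hxL rfl)
  choose U hU hxU hUL using h
  obtain ⟨t, ht⟩ := hK.isCompact.elim_finite_subcover (fun x : K => U x)
    (fun x => (hU x).2) (fun x hx => Set.mem_iUnion.2 ⟨⟨x, hx⟩, hxU ⟨x, hx⟩⟩)
  refine ⟨⋃ x ∈ t, U x, Set.Finite.isClopen_biUnion t.finite_toSet (fun x _ => hU x), ht, ?_⟩
  rw [Set.disjoint_left]
  rintro a ha haL
  obtain ⟨x, _, hx⟩ := Set.mem_iUnion₂.1 ha
  exact (hUL x).ne_of_mem hx haL rfl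

end Top

section Act
variable {G T : Type*} [Group G] [TopologicalSpace G] [IsTopologicalGroup G] [CompactSpace G]
  [TopologicalSpace T] [T2Space T] [CompactSpace T] [MulAction G T] [ContinuousSMul G T]

def actE (K : Set G) (U : Set T) : Set T := {t | ∃ g ∈ K, g • t ∈ U}

theorem isClosed_actE {K : Set G} {U : Set T} (hK : IsClosed K) (hU : IsClosed U) :
    IsClosed (actE K U) := by
  have hS : IsCompact ((K ×ˢ (Set.univ : Set T)) ∩ (fun p : G × T => p.1 • p.2) ⁻¹' U) := by
    refine (hK.isCompact.prod isCompact_univ).inter_right ?_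
    exact hU.preimage (continuous_smul)
  have : actE K U = Prod.snd '' ((K ×ˢ (Set.univ : Set T)) ∩ (fun p : G × T => p.1 • p.2) ⁻¹' U) := by
    ext t
    constructor
    · rintro ⟨g, hg, hgt⟩; exact ⟨(g, t), ⟨⟨hg, trivial⟩, hgt⟩, rfl⟩
    · rintro ⟨⟨g, t'⟩, ⟨⟨hg, -⟩, hgt⟩, rfl⟩; exact ⟨g, hg, hgt⟩
  rw [this]
  exact (hS.image continuous_snd).isClosed

theorem isOpen_actE {K : Set G} {U : Set T} (hU : IsOpen U) : IsOpen (actE K U) := by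
  have : actE K U = ⋃ g ∈ K, (fun t => g • t) ⁻¹' U := by
    ext t; simp [actE]
  rw [this]
  exact isOpen_biUnion fun g _ => hU.preimage (continuous_const_smul g)

theorem isClopen_actE {K : Set G} {U : Set T} (hK : IsClosed K) (hU : IsClopen U) :
    IsClopen (actE K U) := ⟨isClosed_actE hK hU.1, isOpen_actE hU.2⟩

theorem isClopen_smul_set {g : G} {U : Set T} (hU : IsClopen U) : IsClopen (g • U) := by
  have : g • U = (fun t => g⁻¹ • t) ⁻¹' U := by
    ext t; simp [Set.mem_smul_set_iff_inv_smul_mem]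
  rw [this]
  exact hU.preimage (continuous_const_smul _)

theorem isClosed_exists_fix {K : Set G} (hK : IsClosed K) :
    IsClosed {t : T | ∃ g ∈ K, g • t = t} := by
  have hS : IsCompact ((K ×ˢ (Set.univ : Set T)) ∩ {p : G × T | p.1 • p.2 = p.2}) := by
    refine (hK.isCompact.prod isCompact_univ).inter_right ?_
    exact isClosed_eq (continuous_smul) continuous_snd
  have : {t : T | ∃ g ∈ K, g • t = t} =
      Prod.snd '' ((K ×ˢ (Set.univ : Set T)) ∩ {p : G × T | p.1 • p.2 = p.2}) := by
    ext t
    constructor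
    · rintro ⟨g, hg, hgt⟩; exact ⟨(g, t), ⟨⟨hg, trivial⟩, hgt⟩, rfl⟩
    · rintro ⟨⟨g, t'⟩, ⟨⟨hg, -⟩, hgt⟩, rfl⟩; exact ⟨g, hg, hgt⟩
  rw [this]
  exact (hS.image continuous_snd).isClosed

variable [T2Space G] [TotallyDisconnectedSpace G] [TotallyDisconnectedSpace T]

/-- The basic clopen neighborhood construction. -/
theorem exists_basic_nbhd {X : Type*} (N : Subgroup G) (f : T → X) [N.Normal]
    (hNo : IsOpen (N : Set G))
    (hf : ∀ x : X, IsClopen (f ⁻¹' {x}))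
    (hfN : ∀ n ∈ N, ∀ t : T, f (n • t) = f t)
    (hfS : ∀ (σ : G) (t t' : T), σ • t = t → f t' = f t → f (σ • t') = f t)
    {R : Set T} (hR : IsClopen R) (hRinv : ∀ g : G, g • R = R)
    (s : T) (hsR : s ∈ R) :
    ∃ U : Set T, IsClopen U ∧ s ∈ U ∧ U ⊆ R ∧ (∀ t ∈ U, f t = f s) ∧
      (∀ h ∈ stabilizer G s ⊔ N, h • U = U) ∧
      (∀ g : G, g ∉ stabilizer G s ⊔ N → Disjoint (g • U) U) := by
  classical
  set H : Subgroup G := stabilizer G s ⊔ N with hH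
  have hHo : IsOpen (H : Set G) := Subgroup.isOpen_mono (le_sup_right : N ≤ H) hNo
  have hHcl : IsClosed (H : Set G) := H.isClosed_of_isOpen hHo
  -- membership decomposition
  have hHmem : ∀ h ∈ H, ∃ σ n, σ ∈ stabilizer G s ∧ n ∈ N ∧ h = σ * n := by
    intro h hh
    have : h ∈ ((stabilizer G s : Set G) * (N : Set G)) := by
      rw [← Subgroup.mul_normal (stabilizer G s) N]; exact hh
    obtain ⟨σ, hσ, n, hn, rfl⟩ := this
    exact ⟨σ, n, hσ, hn, rfl⟩
  -- f-invariance of fiber under H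
  have hfH : ∀ h ∈ H, ∀ t : T, f t = f s → f (h • t) = f s := by
    intro h hh t ht
    obtain ⟨σ, n, hσ, hn, rfl⟩ := hHmem h hh
    rw [mul_smul]
    exact hfS σ s (n • t) hσ ((hfN n hn t).trans ht)
  have hRmem : ∀ (g : G) (t : T), t ∈ R → g • t ∈ R := by
    intro g t ht
    rw [← hRinv g]; exact Set.smul_mem_smul_set ht
  set F : Set T := f ⁻¹' {f s} ∩ R with hF
  have hFclopen : IsClopen F := (hf (f s)).inter hR
  have hFH : ∀ h ∈ H, ∀ t ∈ F, h • t ∈ F := by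
    rintro h hh t ⟨ht1, ht2⟩
    exact ⟨hfH h hh t ht1, hRmem h t ht2⟩
  have hsF : s ∈ F := ⟨rfl, hsR⟩
  -- orbits
  set orbH : Set T := (fun h => h • s) '' (H : Set G) with horbH
  set Kc : Set G := (H : Set G)ᶜ with hKc
  set orbK : Set T := (fun g => g • s) '' Kc with horbK
  have hcont : Continuous (fun g : G => g • s) := continuous_id.smul continuous_const
  have horbHc : IsCompact orbH := (hHcl.isCompact).image hcont
  have horbKc : IsCompact orbK := (hHo.isClosed_compl.isCompact).image hcont
  have hdisj : Disjoint orbH orbK := by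
    rw [Set.disjoint_left]
    rintro t ⟨h, hh, rfl⟩ ⟨k, hk, hks⟩
    simp only at hks
    apply hk
    have h1 : h⁻¹ * k ∈ stabilizer G s := by
      rw [mem_stabilizer_iff, mul_smul, hks]
      exact inv_smul_smul h s
    have h2 : h * (h⁻¹ * k) ∈ H := H.mul_mem hh ((le_sup_left : stabilizer G s ≤ H) h1)
    simpa [mul_inv_cancel_left] using h2
  obtain ⟨U₀', hU₀'clopen, hU₀'sub, hU₀'disj⟩ :=
    exists_isClopen_sep horbHc.isClosed horbKc.isClosed hdisj
  set U₀ : Set T := U₀' ∩ F with hU₀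
  have hU₀clopen : IsClopen U₀ := hU₀'clopen.inter hFclopen
  have horbHU₀ : orbH ⊆ U₀ := by
    rintro t ⟨h, hh, rfl⟩
    exact ⟨hU₀'sub ⟨h, hh, rfl⟩, hFH h hh s hsF⟩
  have hU₀K : ∀ g ∈ Kc, ∀ t, g • t = t → t ∉ U₀ → True := fun _ _ _ _ _ => trivial
  set W₁ : Set T := (actE (H : Set G) U₀ᶜ)ᶜ with hW₁
  set W₂ : Set T := (actE Kc U₀)ᶜ with hW₂
  have hW₁clopen : IsClopen W₁ := (isClopen_actE hHcl hU₀clopen.compl).compl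
  have hW₂clopen : IsClopen W₂ := (isClopen_actE hHo.isClosed_compl hU₀clopen).compl
  have hW₁mem : ∀ t : T, t ∈ W₁ ↔ ∀ h ∈ H, h • t ∈ U₀ := by
    intro t; simp [hW₁, actE]
  have hW₂mem : ∀ t : T, t ∈ W₂ ↔ ∀ g ∈ Kc, g • t ∉ U₀ := by
    intro t; simp [hW₂, actE]
  set U₁ : Set T := U₀ ∩ (W₁ ∩ W₂) with hU₁
  have hU₁clopen : IsClopen U₁ := hU₀clopen.inter (hW₁clopen.inter hW₂clopen)
  have hsU₁ : s ∈ U₁ := by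
    refine ⟨horbHU₀ ⟨1, H.one_mem, one_smul G s⟩, ?_, ?_⟩
    · rw [hW₁mem]; intro h hh; exact horbHU₀ ⟨h, hh, rfl⟩
    · rw [hW₂mem]; intro g hg hgU
      exact (hU₀'disj.ne_of_mem hgU.1 ⟨g, hg, rfl⟩) rfl
  set U : Set T := actE (H : Set G) U₁ with hU
  have hUclopen : IsClopen U := isClopen_actE hHcl hU₁clopen
  have hsU : s ∈ U := ⟨1, H.one_mem, by simpa using hsU₁⟩
  have hUF : U ⊆ F := by
    rintro t ⟨h, hh, hht⟩
    have h1 : h • t ∈ F := hht.1.2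
    have h2 : h⁻¹ • (h • t) ∈ F := hFH h⁻¹ (H.inv_mem hh) _ h1
    rwa [inv_smul_smul] at h2
  have hHinv : ∀ h₀ ∈ H, h₀ • U = U := by
    intro h₀ hh₀
    ext t
    rw [Set.mem_smul_set_iff_inv_smul_mem]
    constructor
    · rintro ⟨h, hh, hin⟩
      refine ⟨h * h₀⁻¹, H.mul_mem hh (H.inv_mem hh₀), ?_⟩
      rw [mul_smul]; exact hin
    · rintro ⟨h, hh, hin⟩
      refine ⟨h * h₀, H.mul_mem hh hh₀, ?_⟩
      rw [smul_smul, mul_assoc, mul_inv_cancel, mul_one]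
      exact hin
  have hUdisj : ∀ g : G, g ∉ H → Disjoint (g • U) U := by
    intro g hg
    rw [Set.disjoint_left]
    rintro t htg htU
    rw [Set.mem_smul_set_iff_inv_smul_mem] at htg
    obtain ⟨h₂, hh₂, hu₂⟩ := htg
    obtain ⟨h₁, hh₁, hu₁⟩ := htU
    set k : G := h₁ * g * h₂⁻¹ with hk
    have hkK : k ∈ Kc := by
      intro hkH
      apply hg
      have : h₁⁻¹ * k * h₂ ∈ H := H.mul_mem (H.mul_mem (H.inv_mem hh₁) hkH) hh₂
      simpa [hk, mul_assoc] using this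
    have hW2 : h₂ • g⁻¹ • t ∈ W₂ := hu₂.2.2
    rw [hW₂mem] at hW2
    apply hW2 k hkK
    have : k • h₂ • g⁻¹ • t = h₁ • t := by
      simp [hk, smul_smul, mul_assoc]
    rw [this]
    exact hu₁.1
  exact ⟨U, hUclopen, hsU, fun t ht => (hUF ht).2, fun t ht => (hUF ht).1,
    hHinv, hUdisj⟩

section Quot

variable {X : Type*} (N : Subgroup G) [N.Normal] (f : T → X)

/-- image of the stabilizer in `G ⧸ N`. -/
def imStab (t : T) : Subgroup (G ⧸ N) := (stabilizer G t).map (QuotientGroup.mk' N)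

theorem mem_imStab {t : T} {q : G ⧸ N} :
    q ∈ imStab N t ↔ ∃ g : G, g • t = t ∧ QuotientGroup.mk' N g = q := by
  simp [imStab, Subgroup.mem_map, mem_stabilizer_iff]

/-- the order of the image of the stabilizer. -/
noncomputable def ordN (t : T) : ℕ := Nat.card (imStab N t)

theorem isClosed_mem_imStab (hNo : IsOpen (N : Set G)) (q : G ⧸ N) :
    IsClosed {t : T | q ∈ imStab N t} := by
  have hNcl : IsClosed (N : Set G) := N.isClosed_of_isOpen hNo
  have hC : IsClosed ((fun g : G => (q.out)⁻¹ * g) ⁻¹' (N : Set G)) :=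
    hNcl.preimage (continuous_const.mul continuous_id)
  have : {t : T | q ∈ imStab N t} =
      {t : T | ∃ g ∈ (fun g : G => (q.out)⁻¹ * g) ⁻¹' (N : Set G), g • t = t} := by
    ext t
    rw [Set.mem_setOf_eq, mem_imStab]
    constructor
    · rintro ⟨g, hg, rfl⟩
      refine ⟨g, ?_, hg⟩
      have : (QuotientGroup.mk' N g).out⁻¹ * g ∈ N := by
        rw [← QuotientGroup.eq]
        simp [QuotientGroup.out_eq']
      exact this
    · rintro ⟨g, hgN, hgt⟩
      refine ⟨g, hgt, ?_⟩
      have : (QuotientGroup.mk (q.out)⁻¹⁻¹ : G ⧸ N) = QuotientGroup.mk g → True := fun _ => trivial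
      have h2 : (QuotientGroup.mk q.out : G ⧸ N) = QuotientGroup.mk g := by
        rw [QuotientGroup.eq]; exact hgN
      rw [QuotientGroup.mk'_apply, ← h2, QuotientGroup.out_eq']
  rw [this]
  exact isClosed_exists_fix hC

theorem ordN_smul (g : G) (t : T) : ordN N (g • t) = ordN N t := by
  have hmap : imStab N (g • t) =
      (imStab N t).map (MulAut.conj ((QuotientGroup.mk g : G ⧸ N))).toMonoidHom := by
    ext q
    rw [mem_imStab, Subgroup.mem_map_equiv]
    constructor
    · rintro ⟨h, hh, rfl⟩
      rw [mem_imStab]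
      refine ⟨g⁻¹ * h * g, ?_, ?_⟩
      · rw [mul_smul, mul_smul, hh, inv_smul_smul]
      · simp [MulAut.conj, QuotientGroup.mk'_apply]
    · intro hq
      rw [mem_imStab] at hq
      obtain ⟨h, hh, hmk⟩ := hq
      refine ⟨g * h * g⁻¹, ?_, ?_⟩
      · rw [mul_smul, mul_smul, inv_smul_smul, hh]
      · have hq : q = (MulAut.conj ((QuotientGroup.mk g : G ⧸ N)))
            ((QuotientGroup.mk' N) h) := by rw [hmk]; simp; group
        rw [hq]
        rfl
  rw [ordN, ordN, hmap]
  exact (Nat.card_congr ((imStab N t).equivMapOfInjective _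
    (MulAut.conj ((QuotientGroup.mk g : G ⧸ N))).injective).toEquiv).symm

theorem isClosed_ordN_ge [Finite (G ⧸ N)] (hNo : IsOpen (N : Set G)) (n : ℕ) :
    IsClosed {t : T | n ≤ ordN N t} := by
  have hfin : Finite (Subgroup (G ⧸ N)) := by
    exact Finite.of_injective _ (SetLike.coe_injective (A := Subgroup (G ⧸ N)))
  have : {t : T | n ≤ ordN N t} =
      ⋃ K ∈ {K : Subgroup (G ⧸ N) | n ≤ Nat.card K},
        ⋂ q ∈ (K : Set (G ⧸ N)), {t : T | q ∈ imStab N t} := by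
    ext t
    simp only [Set.mem_iUnion, Set.mem_iInter, Set.mem_setOf_eq]
    constructor
    · intro h
      exact ⟨imStab N t, h, fun q hq => hq⟩
    · rintro ⟨K, hK, hsub⟩
      have hle : K ≤ imStab N t := fun q hq => hsub q hq
      exact hK.trans (Subgroup.card_le_of_le hle)
  rw [this]
  exact (Set.toFinite _).isClosed_biUnion fun K _ =>
    isClosed_biInter fun q _ => isClosed_mem_imStab N hNo q

theorem subgroup_eq_of_le_card {Q : Type*} [Group Q] [Finite Q] {H K : Subgroup Q}
    (h : H ≤ K) (hc : Nat.card K ≤ Nat.card H) : H = K := by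
  apply SetLike.coe_injective
  refine Set.eq_of_subset_of_ncard_le h ?_ (Set.toFinite _)
  rwa [← Nat.card_coe_set_eq, ← Nat.card_coe_set_eq]


/-- A good partition of an invariant clopen set `R`. -/
structure IsGoodPart {X : Type*} (N : Subgroup G) (f : T → X) (R : Set T)
    (P : Set (Set T)) : Prop where
  fin : P.Finite
  nonempty : ∀ C ∈ P, C.Nonempty
  clopen : ∀ C ∈ P, IsClopen C
  disj : ∀ C ∈ P, ∀ D ∈ P, C ≠ D → Disjoint C D
  cover : ⋃₀ P = R
  inv : ∀ C ∈ P, ∀ g : G, g • C ∈ P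
  const : ∀ C ∈ P, ∀ t ∈ C, ∀ t' ∈ C, f t = f t'
  ninv : ∀ C ∈ P, ∀ n ∈ N, n • C = C
  wit : ∀ C ∈ P, ∃ t ∈ C, ∀ g : G, g • C = C → ∃ h : G, h • t = t ∧ h⁻¹ * g ∈ N

theorem good_part_aux {X : Type*} (N : Subgroup G) (f : T → X) [N.Normal]
    [Finite (G ⧸ N)] (hNo : IsOpen (N : Set G))
    (hf : ∀ x : X, IsClopen (f ⁻¹' {x}))
    (hfN : ∀ n ∈ N, ∀ t : T, f (n • t) = f t)
    (hfS : ∀ (σ : G) (t t' : T), σ • t = t → f t' = f t → f (σ • t') = f t)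
    (hfG : ∀ (g : G) (t t' : T), f t = f t' → f (g • t) = f (g • t'))
    (n : ℕ) :
    ∀ R : Set T, IsClopen R → (∀ g : G, g • R = R) → (∀ t ∈ R, ordN N t ≤ n) →
      ∃ P : Set (Set T), IsGoodPart N f R P := by
  induction n with
  | zero =>
    intro R hRcl hRinv hord
    have hR : R = ∅ := by
      by_contra h
      obtain ⟨t, ht⟩ := Set.nonempty_iff_ne_empty.2 h
      have h1 : 0 < ordN N t := Nat.card_pos
      have h2 := hord t ht
      omega
    refine ⟨∅, ?_⟩
    constructor <;> simp [hR]
  | succ n ih =>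
    intro R hRcl hRinv hord
    classical
    set M : Set T := R ∩ {t : T | n + 1 ≤ ordN N t} with hM
    have hMcl : IsClosed M := hRcl.1.inter (isClosed_ordN_ge N hNo (n+1))
    have hMord : ∀ t ∈ M, ordN N t = n + 1 := fun t ht => le_antisymm (hord t ht.1) ht.2
    have hRmem : ∀ (g : G), ∀ t ∈ R, g • t ∈ R := by
      intro g t ht
      rw [← hRinv g]; exact Set.smul_mem_smul_set ht
    have hMinv : ∀ (g : G), ∀ t ∈ M, g • t ∈ M := by
      rintro g t ⟨ht1, ht2⟩
      refine ⟨hRmem g t ht1, ?_⟩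
      show n + 1 ≤ ordN N (g • t)
      rw [ordN_smul]
      exact ht2
    have hbasic : ∀ s : ↥M, ∃ U : Set T, IsClopen U ∧ (s : T) ∈ U ∧ U ⊆ R ∧
        (∀ t ∈ U, f t = f (s : T)) ∧
        (∀ h ∈ stabilizer G (s : T) ⊔ N, h • U = U) ∧
        (∀ g : G, g ∉ stabilizer G (s : T) ⊔ N → Disjoint (g • U) U) :=
      fun s => exists_basic_nbhd N f hNo hf hfN hfS hRcl hRinv (s : T) s.2.1
    choose U hUcl hUmem hUsub hUf hUinv hUdisj using hbasic
    obtain ⟨sf, hsf⟩ := hMcl.isCompact.elim_finite_subcover (fun s : ↥M => U s)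
      (fun s => (hUcl s).2) (fun t ht => Set.mem_iUnion.2 ⟨⟨t, ht⟩, hUmem ⟨t, ht⟩⟩)
    set l := sf.toList with hl
    set k := l.length with hk
    set idx : Fin k → ↥M := fun i => l.get i with hidx
    set UU : Fin k → Set T := fun i => U (idx i) with hUU
    set HH : Fin k → Subgroup G := fun i => stabilizer G ((idx i : T)) ⊔ N with hHH
    set VV : Fin k → Set T := fun i => actE (Set.univ : Set G) (UU i) with hVV
    have hVmem : ∀ (i : Fin k) (t : T), t ∈ VV i ↔ ∃ g : G, g • t ∈ UU i := by
      intro i t; simp [hVV, actE]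
    have hVsmul : ∀ (i : Fin k) (g : G) (t : T), g • t ∈ VV i ↔ t ∈ VV i := by
      intro i g t
      rw [hVmem, hVmem]
      constructor
      · rintro ⟨g', hg'⟩
        exact ⟨g' * g, by rwa [mul_smul]⟩
      · rintro ⟨g', hg'⟩
        exact ⟨g' * g⁻¹, by rwa [mul_smul, inv_smul_smul]⟩
    set WW : Fin k → Set T := fun i => VV i \ ⋃ j ∈ {j : Fin k | j < i}, VV j with hWW
    have hVcl : ∀ i, IsClopen (VV i) := fun i => isClopen_actE isClosed_univ (hUcl (idx i))
    have hWcl : ∀ i, IsClopen (WW i) := fun i =>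
      (hVcl i).diff ((Set.toFinite _).isClopen_biUnion (fun j _ => hVcl j))
    have hWmem : ∀ (i : Fin k) (t : T), t ∈ WW i ↔ t ∈ VV i ∧ ∀ j < i, t ∉ VV j := by
      intro i t; simp [hWW]
    have hWsmul : ∀ (i : Fin k) (g : G) (t : T), g • t ∈ WW i ↔ t ∈ WW i := by
      intro i g t
      rw [hWmem, hWmem]
      constructor
      · rintro ⟨h1, h2⟩
        exact ⟨(hVsmul i g t).1 h1, fun j hj hjt => h2 j hj ((hVsmul j g t).2 hjt)⟩
      · rintro ⟨h1, h2⟩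
        exact ⟨(hVsmul i g t).2 h1, fun j hj hjt => h2 j hj ((hVsmul j g t).1 hjt)⟩
    -- blocks
    set blk : Fin k → G → Set T := fun i g => (g • UU i) ∩ WW i with hblk
    have hblkmem : ∀ (i : Fin k) (g : G) (t : T), t ∈ blk i g ↔ g⁻¹ • t ∈ UU i ∧ t ∈ WW i := by
      intro i g t
      rw [hblk]
      simp [Set.mem_smul_set_iff_inv_smul_mem]
    have hUmeet : ∀ (i : Fin k) (a b : G) (x : T),
        x ∈ a • UU i → x ∈ b • UU i → a⁻¹ * b ∈ HH i := by
      intro i a b x hxa hxb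
      by_contra hab
      have hd := hUdisj (idx i) (a⁻¹ * b) hab
      rw [Set.mem_smul_set_iff_inv_smul_mem] at hxa hxb
      refine hd.ne_of_mem (a := a⁻¹ • x) ?_ hxa rfl
      rw [Set.mem_smul_set_iff_inv_smul_mem]
      have he : (a⁻¹ * b)⁻¹ • a⁻¹ • x = b⁻¹ • x := by
        rw [smul_smul]
        congr 1
        group
      rw [he]
      exact hxb
    have hUtrans : ∀ (i : Fin k) (a b : G), a⁻¹ * b ∈ HH i → b • UU i = a • UU i := by
      intro i a b hab
      have := hUinv (idx i) (a⁻¹ * b) hab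
      calc b • UU i = (a * (a⁻¹ * b)) • UU i := by rw [mul_inv_cancel_left]
      _ = a • ((a⁻¹ * b) • UU i) := by rw [mul_smul]
      _ = a • UU i := by rw [this]
    set P₁ : Set (Set T) := {C | (∃ i g, C = blk i g) ∧ (C ∩ M).Nonempty} with hP₁
    have hblk_smul : ∀ (g₀ : G) (i : Fin k) (g : G), g₀ • blk i g = blk i (g₀ * g) := by
      intro g₀ i g
      rw [hblk]
      simp only
      ext x
      rw [Set.mem_smul_set_iff_inv_smul_mem]
      rw [Set.mem_inter_iff, Set.mem_inter_iff,
        Set.mem_smul_set_iff_inv_smul_mem, Set.mem_smul_set_iff_inv_smul_mem]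
      constructor
      · rintro ⟨h1, h2⟩
        refine ⟨by rwa [mul_inv_rev, mul_smul], (hWsmul i g₀⁻¹ x).1 h2⟩
      · rintro ⟨h1, h2⟩
        rw [mul_inv_rev, mul_smul] at h1
        exact ⟨h1, (hWsmul i g₀⁻¹ x).2 h2⟩
    have hP₁inv : ∀ C ∈ P₁, ∀ g₀ : G, g₀ • C ∈ P₁ := by
      rintro C ⟨⟨i, g, rfl⟩, ⟨x, hx1, hx2⟩⟩ g₀
      refine ⟨⟨i, g₀ * g, hblk_smul g₀ i g⟩, ⟨g₀ • x, ?_, hMinv g₀ x hx2⟩⟩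
      exact Set.smul_mem_smul_set hx1
    have hblkR : ∀ (i : Fin k) (g : G), blk i g ⊆ R := by
      rintro i g x ⟨hx1, _⟩
      rw [Set.mem_smul_set_iff_inv_smul_mem] at hx1
      have := hRmem g _ (hUsub (idx i) hx1)
      rwa [smul_inv_smul] at this
    have hblkN : ∀ (i : Fin k) (g : G), ∀ n₀ ∈ N, n₀ • blk i g = blk i g := by
      intro i g n₀ hn₀
      rw [hblk_smul]
      have hmem : g⁻¹ * (n₀ * g) ∈ HH i :=
        (le_sup_right : N ≤ HH i) (by
          have h0 := Subgroup.Normal.conj_mem ‹N.Normal› n₀ hn₀ g⁻¹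
          have he : g⁻¹ * (n₀ * g) = g⁻¹ * n₀ * g⁻¹⁻¹ := by group
          rw [he]
          exact h0)
      rw [hblk]
      simp only
      rw [hUtrans i g (n₀ * g) hmem]
    have hP₁fin : P₁.Finite := by
      have : P₁ ⊆ Set.range (fun p : Fin k × (G ⧸ N) => blk p.1 p.2.out) := by
        rintro C ⟨⟨i, g, rfl⟩, -⟩
        refine ⟨(i, QuotientGroup.mk g), ?_⟩
        simp only
        have hn : g⁻¹ * (QuotientGroup.mk g : G ⧸ N).out ∈ N := by
          rw [← QuotientGroup.eq]
          rw [QuotientGroup.out_eq']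
        have : (QuotientGroup.mk g : G ⧸ N).out • UU i = g • UU i :=
          hUtrans i g _ ((le_sup_right : N ≤ HH i) hn)
        rw [hblk]
        simp only
        rw [this]
      exact Set.Finite.subset (Set.finite_range _) this
    have hMsub : M ⊆ ⋃₀ P₁ := by
      intro t ht
      have hcov : ∃ i : Fin k, t ∈ VV i := by
        have := hsf ht
        rw [Set.mem_iUnion₂] at this
        obtain ⟨s, hs, hts⟩ := this
        have : s ∈ l := Finset.mem_toList.2 hs
        obtain ⟨i, hi⟩ := List.mem_iff_get.1 this
        refine ⟨i, (hVmem i t).2 ⟨1, ?_⟩⟩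
        rw [one_smul, hUU]
        show t ∈ U (idx i)
        have h5 : idx i = s := hi
        rw [h5]
        exact hts
      set S : Finset (Fin k) := Finset.univ.filter (fun i => t ∈ VV i) with hS
      have hSne : S.Nonempty := by
        obtain ⟨i, hi⟩ := hcov
        exact ⟨i, by simp [hS, hi]⟩
      set i := S.min' hSne with hi
      have hti : t ∈ VV i := by
        have h9 : i ∈ S := S.min'_mem hSne
        rw [hS] at h9
        simpa using h9
      have htw : t ∈ WW i := by
        rw [hWmem]
        refine ⟨hti, fun j hj hjt => ?_⟩
        have : j ∈ S := by simp [hS, hjt]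
        exact absurd (S.min'_le j this) (not_le.2 hj)
      obtain ⟨g, hg⟩ := (hVmem i t).1 hti
      refine ⟨blk i g⁻¹, ⟨⟨i, g⁻¹, rfl⟩, ⟨t, ⟨?_, htw⟩, ht⟩⟩, ?_, htw⟩
      · rwa [Set.mem_smul_set_iff_inv_smul_mem, inv_inv]
      · rwa [Set.mem_smul_set_iff_inv_smul_mem, inv_inv]
    set Z : Set T := R \ ⋃₀ P₁ with hZ
    have hP₁clopen : ∀ C ∈ P₁, IsClopen C := by
      rintro C ⟨⟨i, g, rfl⟩, -⟩
      exact (isClopen_smul_set (hUcl (idx i))).inter (hWcl i)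
    have hsU₁cl : IsClopen (⋃₀ P₁) := by
      rw [Set.sUnion_eq_biUnion]
      exact hP₁fin.isClopen_biUnion hP₁clopen
    have hZcl : IsClopen Z := hRcl.diff hsU₁cl
    have hsU₁inv : ∀ g : G, ∀ x ∈ ⋃₀ P₁, g • x ∈ ⋃₀ P₁ := by
      rintro g x ⟨C, hC, hxC⟩
      exact ⟨g • C, hP₁inv C hC g, Set.smul_mem_smul_set hxC⟩
    have hZinv : ∀ g : G, g • Z = Z := by
      intro g
      apply Set.eq_of_subset_of_subset
      · rintro x hx
        rw [Set.mem_smul_set_iff_inv_smul_mem] at hx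
        obtain ⟨hx1, hx2⟩ := hx
        constructor
        · have := hRmem g _ hx1
          rwa [smul_inv_smul] at this
        · intro hxU
          exact hx2 (by
            have := hsU₁inv g⁻¹ x hxU
            exact this)
      · intro x hx
        rw [Set.mem_smul_set_iff_inv_smul_mem]
        obtain ⟨hx1, hx2⟩ := hx
        constructor
        · exact hRmem g⁻¹ x hx1
        · intro hxU
          have := hsU₁inv g _ hxU
          rw [smul_inv_smul] at this
          exact hx2 this
    have hZord : ∀ t ∈ Z, ordN N t ≤ n := by
      rintro t ⟨ht1, ht2⟩
      by_contra h
      have : n + 1 ≤ ordN N t := by omega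
      exact ht2 (hMsub ⟨ht1, this⟩)
    obtain ⟨P₂, hP₂⟩ := ih Z hZcl hZinv hZord
    have hP₂Z : ∀ C ∈ P₂, C ⊆ Z := by
      intro C hC x hx
      rw [← hP₂.cover]
      exact ⟨C, hC, hx⟩
    refine ⟨P₁ ∪ P₂, ?_⟩
    constructor
    · exact hP₁fin.union hP₂.fin
    · rintro C (hC | hC)
      · obtain ⟨-, x, hx, -⟩ := hC
        exact ⟨x, hx⟩
      · exact hP₂.nonempty C hC
    · rintro C (hC | hC)
      · exact hP₁clopen C hC
      · exact hP₂.clopen C hC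
    · rintro C (hC | hC) D (hD | hD) hCD
      · obtain ⟨⟨i, g, rfl⟩, -⟩ := hC
        obtain ⟨⟨j, g', rfl⟩, -⟩ := hD
        rw [Set.disjoint_left]
        intro x hxC hxD
        rcases eq_or_ne i j with rfl | hij
        · apply hCD
          rw [hblk]
          simp only
          rw [hUtrans i g g' (hUmeet i g g' x hxC.1 hxD.1)]
        · rcases lt_or_gt_of_ne hij with h | h
          · exact ((hWmem j x).1 hxD.2).2 i h ((hWmem i x).1 hxC.2).1
          · exact ((hWmem i x).1 hxC.2).2 j h ((hWmem j x).1 hxD.2).1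
      · rw [Set.disjoint_left]
        intro x hxC hxD
        exact (hP₂Z D hD hxD).2 ⟨C, hC, hxC⟩
      · rw [Set.disjoint_left]
        intro x hxC hxD
        exact (hP₂Z C hC hxC).2 ⟨D, hD, hxD⟩
      · exact hP₂.disj C hC D hD hCD
    · rw [Set.sUnion_union, hP₂.cover]
      apply Set.eq_of_subset_of_subset
      · rintro x (hx | hx)
        · obtain ⟨C, hC, hxC⟩ := hx
          obtain ⟨⟨i, g, rfl⟩, -⟩ := hC
          exact hblkR i g hxC
        · exact hx.1
      · intro x hx
        by_cases h : x ∈ ⋃₀ P₁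
        · exact Or.inl h
        · exact Or.inr ⟨hx, h⟩
    · rintro C (hC | hC) g
      · exact Or.inl (hP₁inv C hC g)
      · exact Or.inr (hP₂.inv C hC g)
    · rintro C (hC | hC) t ht t' ht'
      · obtain ⟨⟨i, g, rfl⟩, -⟩ := hC
        have h1 : g⁻¹ • t ∈ UU i := by
          rw [← Set.mem_smul_set_iff_inv_smul_mem]
          exact ht.1
        have h2 : g⁻¹ • t' ∈ UU i := by
          rw [← Set.mem_smul_set_iff_inv_smul_mem]
          exact ht'.1
        have h3 : f (g⁻¹ • t) = f (g⁻¹ • t') := by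
          rw [hUf (idx i) _ h1, hUf (idx i) _ h2]
        have := hfG g _ _ h3
        rwa [smul_inv_smul, smul_inv_smul] at this
      · exact hP₂.const C hC t ht t' ht'
    · rintro C (hC | hC) n₀ hn₀
      · obtain ⟨⟨i, g, rfl⟩, -⟩ := hC
        exact hblkN i g n₀ hn₀
      · exact hP₂.ninv C hC n₀ hn₀
    · rintro C (hC | hC)
      · obtain ⟨⟨i, g, rfl⟩, ⟨t₀, ht₀C, ht₀M⟩⟩ := hC
        refine ⟨t₀, ht₀C, ?_⟩
        intro g' hg'
        -- subgroup computation
        have hHmap : (HH i).map (QuotientGroup.mk' N) = imStab N ((idx i : T)) := by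
          rw [hHH]
          simp only
          rw [Subgroup.map_sup]
          have : N.map (QuotientGroup.mk' N) = ⊥ := by
            rw [Subgroup.map_eq_bot_iff, QuotientGroup.ker_mk']
          rw [this, sup_bot_eq]
          rfl
        have hconj : ∀ a b : G, (QuotientGroup.mk' N) (b⁻¹ * (a * b)) =
            (MulAut.conj ((QuotientGroup.mk b : G ⧸ N))).symm ((QuotientGroup.mk' N) a) := by
          intro a b
          rw [MulAut.conj_symm_apply]
          simp only [map_mul, map_inv, QuotientGroup.mk'_apply]
          group
        set cj := MulAut.conj ((QuotientGroup.mk g : G ⧸ N)) with hcj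
        set Kc : Subgroup (G ⧸ N) :=
          Subgroup.map cj.toMonoidHom ((HH i).map (QuotientGroup.mk' N)) with hKc
        have hle : imStab N t₀ ≤ Kc := by
          intro q hq
          rw [mem_imStab] at hq
          obtain ⟨h, hh, rfl⟩ := hq
          rw [hKc, Subgroup.mem_map_equiv]
          have hmem : g⁻¹ * (h * g) ∈ HH i := by
            apply hUmeet i g (h * g) t₀ ht₀C.1
            have h6 : h • t₀ ∈ h • (g • UU i) := Set.smul_mem_smul_set ht₀C.1
            rw [hh] at h6
            rwa [smul_smul] at h6
          exact ⟨g⁻¹ * (h * g), hmem, hconj h g⟩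
        have hcard1 : Nat.card Kc = n + 1 := by
          rw [hKc]
          have e1 : Nat.card (Subgroup.map cj.toMonoidHom ((HH i).map (QuotientGroup.mk' N)))
              = Nat.card ((HH i).map (QuotientGroup.mk' N)) :=
            (Nat.card_congr (((HH i).map (QuotientGroup.mk' N)).equivMapOfInjective
              _ cj.injective).toEquiv).symm
          rw [e1, hHmap]
          exact hMord _ (idx i).2
        have hcard2 : Nat.card (imStab N t₀) = n + 1 := hMord t₀ ht₀M
        have heq : imStab N t₀ = Kc := subgroup_eq_of_le_card hle (by rw [hcard1, hcard2])
        have hg'K : (QuotientGroup.mk g' : G ⧸ N) ∈ Kc := by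
          rw [hKc, Subgroup.mem_map_equiv]
          have hmem : g⁻¹ * (g' * g) ∈ HH i := by
            apply hUmeet i g (g' * g) t₀ ht₀C.1
            have ht : g'⁻¹ • t₀ ∈ blk i g := by
              have h8 : t₀ ∈ g' • blk i g := by rw [hg']; exact ht₀C
              rwa [Set.mem_smul_set_iff_inv_smul_mem] at h8
            have h7 : g' • (g'⁻¹ • t₀) ∈ g' • (g • UU i) := Set.smul_mem_smul_set ht.1
            rw [smul_inv_smul] at h7
            rwa [smul_smul] at h7
          exact ⟨g⁻¹ * (g' * g), hmem, hconj g' g⟩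
        rw [← heq, mem_imStab] at hg'K
        obtain ⟨h, hh, hmk⟩ := hg'K
        refine ⟨h, hh, ?_⟩
        rw [← QuotientGroup.eq]
        exact hmk
      · exact hP₂.wit C hC

end Quot
end Act


/-- Let `(G,T)` be a pile, `N₀` an open normal subgroup of `G`, and `φ : (G,T) → (A,X)` a
morphism of piles into a finite pile. Then there exist a finite pile `B`, an epimorphism of
piles `ψ : (G,T) → B` with `Ker ψ ≤ N₀`, and a morphism of piles `α : B → (A,X)` such that
`α ∘ ψ = φ`. -/
theorem exists_finite_epi_factorization
    (P A : Pile) (hA : A.IsFinite) (N₀ : Subgroup P.G) (hN₀n : N₀.Normal)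
    (hN₀o : IsOpen (N₀ : Set P.G)) (φ : PileHom P A) :
    ∃ B : Pile, B.IsFinite ∧
      ∃ ψ : PileHom P B, ψ.IsEpi ∧ ψ.toGrp.ker ≤ N₀ ∧
        ∃ α : PileHom B A, α.comp ψ = φ := by
  classical
  obtain ⟨hAG, hAT⟩ := hA
  haveI : Finite A.G := hAG
  haveI : Finite A.T := hAT
  haveI : DiscreteTopology A.G := Finite.instDiscreteTopology
  haveI : DiscreteTopology A.T := Finite.instDiscreteTopology
  haveI := hN₀n
  set G := P.G with hG
  set T := P.T with hT
  set N : Subgroup G := N₀ ⊓ φ.toGrp.ker with hN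
  haveI hNn : N.Normal := Subgroup.normal_inf_normal N₀ φ.toGrp.ker
  have hkero : IsOpen (φ.toGrp.ker : Set G) := by
    have h0 : (φ.toGrp.ker : Set G) = φ.toGrp ⁻¹' {1} := by
      ext g; simp [MonoidHom.mem_ker]
    rw [h0]
    exact (isOpen_discrete _).preimage φ.contGrp
  have hNo : IsOpen (N : Set G) := hN₀o.inter hkero
  haveI hQfin : Finite (G ⧸ N) := N.quotient_finite_of_isOpen hNo
  set f : T → A.T := φ.toSp with hf'
  have hf : ∀ x : A.T, IsClopen (f ⁻¹' {x}) := fun x =>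
    (isClopen_discrete _).preimage φ.contSp
  have hker : N ≤ φ.toGrp.ker := inf_le_right
  have hfN : ∀ n ∈ N, ∀ t : T, f (n • t) = f t := by
    intro n hn t
    show φ.toSp (n • t) = φ.toSp t
    rw [φ.equivariant]
    have h1 : φ.toGrp n = 1 := hker hn
    rw [h1, one_smul]
  have hfS : ∀ (σ : G) (t t' : T), σ • t = t → f t' = f t → f (σ • t') = f t := by
    intro σ t t' hσ ht'
    show φ.toSp (σ • t') = φ.toSp t
    have ht'' : φ.toSp t' = φ.toSp t := ht'
    rw [φ.equivariant, ht'', ← φ.equivariant, hσ]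
  have hfG : ∀ (g : G) (t t' : T), f t = f t' → f (g • t) = f (g • t') := by
    intro g t t' h
    show φ.toSp (g • t) = φ.toSp (g • t')
    have h' : φ.toSp t = φ.toSp t' := h
    rw [φ.equivariant, φ.equivariant, h']
  have hord : ∀ t ∈ (Set.univ : Set T), ordN N t ≤ Nat.card (G ⧸ N) := by
    intro t _
    refine le_trans (Subgroup.card_le_of_le le_top) (le_of_eq ?_)
    exact Nat.card_congr Subgroup.topEquiv.toEquiv
  obtain ⟨Pp, hPp⟩ := good_part_aux N f hNo hf hfN hfS hfG (Nat.card (G ⧸ N))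
    Set.univ isClopen_univ (fun g => Set.smul_set_univ) hord
  have huniq : ∀ C ∈ Pp, ∀ D ∈ Pp, (C ∩ D).Nonempty → C = D := by
    rintro C hC D hD ⟨x, hx1, hx2⟩
    by_contra hne
    exact (hPp.disj C hC D hD hne).ne_of_mem hx1 hx2 rfl
  have hex : ∀ t : T, ∃ C ∈ Pp, t ∈ C := by
    intro t
    have h0 : t ∈ ⋃₀ Pp := hPp.cover ▸ Set.mem_univ t
    exact h0
  set blockOf : T → ↥Pp := fun t => ⟨(hex t).choose, (hex t).choose_spec.1⟩ with hblockOf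
  have hblmem : ∀ t : T, t ∈ (blockOf t : Set T) := fun t => (hex t).choose_spec.2
  have hbleq : ∀ (t : T) (C : Set T), C ∈ Pp → t ∈ C → (blockOf t : Set T) = C :=
    fun t C hC htC => huniq _ (blockOf t).2 C hC ⟨t, hblmem t, htC⟩
  have hout : ∀ g : G, ∃ n ∈ N, (QuotientGroup.mk g : G ⧸ N).out = g * n := by
    intro g
    have h1 : (QuotientGroup.mk g : G ⧸ N) =
        QuotientGroup.mk (QuotientGroup.mk g : G ⧸ N).out := by
      rw [QuotientGroup.out_eq']
    refine ⟨g⁻¹ * (QuotientGroup.mk g : G ⧸ N).out, QuotientGroup.eq.1 h1, by group⟩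
  have houtC : ∀ (g : G) (C : Set T), C ∈ Pp →
      (QuotientGroup.mk g : G ⧸ N).out • C = g • C := by
    intro g C hC
    obtain ⟨n, hn, he⟩ := hout g
    rw [he, mul_smul, hPp.ninv C hC n hn]
  letI tQ : TopologicalSpace (G ⧸ N) := ⊥
  haveI dQ : DiscreteTopology (G ⧸ N) := ⟨rfl⟩
  letI tP : TopologicalSpace ↥Pp := ⊥
  haveI dP : DiscreteTopology ↥Pp := ⟨rfl⟩
  haveI finP : Finite ↥Pp := hPp.fin
  letI actQ : MulAction (G ⧸ N) ↥Pp :=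
    { smul := fun q C => ⟨q.out • (C : Set T), hPp.inv _ C.2 q.out⟩
      one_smul := fun C => by
        apply Subtype.ext
        show (1 : G ⧸ N).out • (C : Set T) = C
        have h1 : ((1 : G ⧸ N)) = QuotientGroup.mk (1 : G) := rfl
        rw [h1, houtC 1 C.1 C.2, one_smul]
      mul_smul := fun q q' C => by
        apply Subtype.ext
        show (q * q').out • (C : Set T) = q.out • (q'.out • (C : Set T))
        have h1 : q * q' = QuotientGroup.mk (q.out * q'.out) := by
          rw [QuotientGroup.mk_mul, QuotientGroup.out_eq', QuotientGroup.out_eq']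
        rw [h1, houtC _ C.1 C.2, mul_smul] }
  haveI tgQ : IsTopologicalGroup (G ⧸ N) :=
    { continuous_mul := continuous_of_discreteTopology
      continuous_inv := continuous_of_discreteTopology }
  haveI csQ : ContinuousSMul (G ⧸ N) ↥Pp := ⟨continuous_of_discreteTopology⟩
  set B : Pile := { G := G ⧸ N, T := ↥Pp } with hB
  have hcoset : ∀ q : G ⧸ N, IsOpen ((QuotientGroup.mk' N) ⁻¹' {q}) := by
    intro q
    have h1 : (QuotientGroup.mk' N) ⁻¹' {q} = (fun g : G => q.out⁻¹ * g) ⁻¹' (N : Set G) := by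
      ext g
      simp only [Set.mem_preimage, Set.mem_singleton_iff, QuotientGroup.mk'_apply, SetLike.mem_coe]
      rw [← QuotientGroup.eq, QuotientGroup.out_eq']
      exact comm
    rw [h1]
    exact hNo.preimage (continuous_const.mul continuous_id)
  have hψcontG : Continuous (QuotientGroup.mk' N : G →* G ⧸ N) := by
    refine ⟨fun s _ => ?_⟩
    have h1 : (QuotientGroup.mk' N) ⁻¹' s = ⋃ q ∈ s, (QuotientGroup.mk' N) ⁻¹' {q} := by
      ext g; simp
    rw [h1]
    exact isOpen_biUnion fun q _ => hcoset q
  have hblfiber : ∀ C : ↥Pp, blockOf ⁻¹' {C} = (C : Set T) := by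
    intro C
    ext t
    simp only [Set.mem_preimage, Set.mem_singleton_iff]
    constructor
    · rintro rfl
      exact hblmem t
    · intro ht
      exact Subtype.ext (hbleq t C.1 C.2 ht)
  have hψcontS : Continuous blockOf := by
    refine ⟨fun s _ => ?_⟩
    have h1 : blockOf ⁻¹' s = ⋃ C ∈ s, blockOf ⁻¹' {C} := by
      ext t; simp
    rw [h1]
    exact isOpen_biUnion fun C hC => (hblfiber C ▸ (hPp.clopen C.1 C.2).2)
  set ψ : PileHom P B :=
    { toGrp := QuotientGroup.mk' N
      contGrp := hψcontG
      toSp := blockOf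
      contSp := hψcontS
      equivariant := fun g t => by
        apply Subtype.ext
        show (blockOf (g • t) : Set T) = (QuotientGroup.mk g : G ⧸ N).out • (blockOf t : Set T)
        rw [houtC g _ (blockOf t).2]
        exact hbleq (g • t) _ (hPp.inv _ (blockOf t).2 g) (Set.smul_mem_smul_set (hblmem t)) }
    with hψ
  have hψepi : ψ.IsEpi := by
    refine ⟨QuotientGroup.mk'_surjective N, ?_, ?_⟩
    · intro C
      obtain ⟨t, ht⟩ := hPp.nonempty C.1 C.2
      exact ⟨t, Subtype.ext (hbleq t C.1 C.2 ht)⟩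
    · intro x
      obtain ⟨t, htC, hwit⟩ := hPp.wit x.1 x.2
      refine ⟨t, Subtype.ext (hbleq t x.1 x.2 htC), ?_⟩
      apply le_antisymm
      · rintro q ⟨h, hh, rfl⟩
        have hh' : h • t = t := hh
        show (QuotientGroup.mk h : G ⧸ N) • x = x
        apply Subtype.ext
        show ((QuotientGroup.mk h : G ⧸ N)).out • x.1 = x.1
        rw [houtC h x.1 x.2]
        refine huniq _ (hPp.inv x.1 x.2 h) _ x.2 ⟨t, ?_, htC⟩
        rw [← hh']
        exact Set.smul_mem_smul_set htC
      · intro q hq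
        have hq' : q • x = x := hq
        have h1 : q.out • x.1 = x.1 := congrArg Subtype.val hq'
        obtain ⟨h, hht, hhN⟩ := hwit q.out h1
        refine ⟨h, hht, ?_⟩
        show (QuotientGroup.mk h : G ⧸ N) = q
        rw [QuotientGroup.eq.2 hhN, QuotientGroup.out_eq']
  have hψker : ψ.toGrp.ker ≤ N₀ := by
    show (QuotientGroup.mk' N).ker ≤ N₀
    rw [QuotientGroup.ker_mk']
    exact inf_le_left
  set pt : ↥Pp → T := fun C => (hPp.nonempty C.1 C.2).choose with hpt
  have hptmem : ∀ C : ↥Pp, pt C ∈ (C : Set T) := fun C => (hPp.nonempty C.1 C.2).choose_spec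
  set α : PileHom B A :=
    { toGrp := QuotientGroup.lift N φ.toGrp hker
      contGrp := continuous_of_discreteTopology
      toSp := fun C => φ.toSp (pt C)
      contSp := continuous_of_discreteTopology
      equivariant := fun q C => by
        show φ.toSp (pt (q • C)) = QuotientGroup.lift N φ.toGrp hker q • φ.toSp (pt C)
        have h1 : pt (q • C) ∈ q.out • (C : Set T) := hptmem (q • C)
        obtain ⟨u, hu, he⟩ := h1
        have h2 : φ.toSp (pt C) = φ.toSp u := hPp.const C.1 C.2 _ (hptmem C) u hu
        rw [h2, ← he, φ.equivariant]
        have h3 : φ.toGrp q.out = QuotientGroup.lift N φ.toGrp hker q := by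
          conv_rhs => rw [← QuotientGroup.out_eq' q]
          rw [QuotientGroup.lift_mk']
        rw [h3] }
    with hα
  refine ⟨B, ⟨hQfin, finP⟩, ψ, hψepi, hψker, α, ?_⟩
  have hgrp : (α.comp ψ).toGrp = φ.toGrp := by
    apply MonoidHom.ext
    intro g
    show QuotientGroup.lift N φ.toGrp hker (QuotientGroup.mk' N g) = φ.toGrp g
    rw [QuotientGroup.mk'_apply, QuotientGroup.lift_mk']
  have hsp : (α.comp ψ).toSp = φ.toSp := by
    funext t
    show φ.toSp (pt (blockOf t)) = φ.toSp t
    exact hPp.const _ (blockOf t).2 _ (hptmem (blockOf t)) t (hblmem t)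
  cases' hcc : α.comp ψ with a b c d e
  rw [hcc] at hgrp hsp
  cases φ
  simp only at hgrp hsp
  subst hgrp
  subst hsp
  rfl
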